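/- arXiv:2603.24509 — 4 statements merged into one kernel-verified Lean document; each statement's English description precedes it below -/
import Mathlib

section
/- Let Q be an n×n real symmetric matrix, N a p×q real matrix, X an n×p real matrix, Y a q×n real matrix, and G a q×q real matrix with G + Gᵀ positive definite. If the (n+q)×(n+q) block matrix [[Q, X N + Yᵀ Gᵀ], [Nᵀ Xᵀ + G Y, −(G + Gᵀ)]] is negative definite, then Q + X N Y + (X N Y)ᵀ is negative definite. -/
/-!
With `P = [1; Y]`, a direct block computation gives
`Pᵀ [[Q, B + Yᵀ Gᵀ], [Bᵀ + G Y, -(G + Gᵀ)]] P = Q + B Y + (B Y)ᵀ`: the terms `Yᵀ Gᵀ Y` and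
`Yᵀ G Y` from the off-diagonal blocks cancel against the lower-right block. Since `P` is injective,
negative definiteness passes from the block matrix to this congruent matrix.
-/

open Matrix

/-- A real symmetric matrix is negative definite if its quadratic form is
negative on all nonzero vectors. -/
def NegDef {n : Type*} [Fintype n] (M : Matrix n n ℝ) : Prop :=
  M.IsSymm ∧ ∀ x : n → ℝ, x ≠ 0 → x ⬝ᵥ M.mulVec x < 0

theorem NegDef.transpose_mul_mul {m n : Type*} [Fintype m] [Fintype n]
    {M : Matrix m m ℝ} (hM : NegDef M) {P : Matrix m n ℝ} (hP : Function.Injective P.mulVec) :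
    NegDef (Pᵀ * M * P) := by
  refine ⟨?_, fun x hx => ?_⟩
  · rw [IsSymm, transpose_mul, transpose_mul, transpose_transpose, hM.1.eq, Matrix.mul_assoc]
  · have hPx : P *ᵥ x ≠ 0 := fun h0 => hx (hP (h0.trans (mulVec_zero P).symm))
    calc x ⬝ᵥ (Pᵀ * M * P) *ᵥ x = P *ᵥ x ⬝ᵥ M *ᵥ (P *ᵥ x) := by
          rw [← mulVec_mulVec, ← mulVec_mulVec, dotProduct_mulVec, vecMul_transpose]
      _ < 0 := hM.2 _ hPx

theorem fromRows_one_mulVec_injective {m n R : Type*} [Fintype n] [DecidableEq n] [Semiring R]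
    (Y : Matrix m n R) : Function.Injective (fromRows (1 : Matrix n n R) Y).mulVec := by
  intro x y hxy
  ext i
  simpa [fromRows_mulVec] using congrFun hxy (Sum.inl i)

theorem transpose_fromRows_one_mul_fromBlocks_mul {n q R : Type*} [Fintype n] [Fintype q]
    [DecidableEq n] [CommRing R] (Q : Matrix n n R) (B : Matrix n q R) (Y : Matrix q n R)
    (G : Matrix q q R) :
    (fromRows 1 Y : Matrix (n ⊕ q) n R)ᵀ * fromBlocks Q (B + Yᵀ * Gᵀ) (Bᵀ + G * Y) (-(G + Gᵀ)) *
        (fromRows 1 Y : Matrix (n ⊕ q) n R) =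
      Q + B * Y + (B * Y)ᵀ := by
  rw [transpose_fromRows, fromCols_mul_fromBlocks, fromCols_mul_fromRows]
  simp only [transpose_one, Matrix.one_mul, Matrix.mul_one, transpose_mul, Matrix.mul_add,
    Matrix.add_mul, Matrix.mul_neg, Matrix.neg_mul, Matrix.mul_assoc]
  abel

theorem stmt_0_general {n p q : ℕ}
    (Q : Matrix (Fin n) (Fin n) ℝ)
    (N : Matrix (Fin p) (Fin q) ℝ)
    (X : Matrix (Fin n) (Fin p) ℝ) (Y : Matrix (Fin q) (Fin n) ℝ)
    (G : Matrix (Fin q) (Fin q) ℝ)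
    (h : NegDef (Matrix.fromBlocks Q (X * N + Yᵀ * Gᵀ) (Nᵀ * Xᵀ + G * Y) (-(G + Gᵀ)))) :
    NegDef (Q + X * N * Y + (X * N * Y)ᵀ) := by
  rw [← transpose_mul X N] at h
  simpa only [transpose_fromRows_one_mul_fromBlocks_mul] using
    h.transpose_mul_mul (fromRows_one_mulVec_injective Y)

/-- Overbounding theorem (Theorem 3 / \cite{sebe2018sequential}): if the block
matrix `[[Q, X N + Yᵀ Gᵀ], [Nᵀ Xᵀ + G Y, −(G + Gᵀ)]]` is negative definite,
where `G + Gᵀ ≻ 0`, then `Q + He(X N Y) ≺ 0`. -/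
theorem stmt_0 {n p q : ℕ}
    (Q : Matrix (Fin n) (Fin n) ℝ) (hQ : Q.IsSymm)
    (N : Matrix (Fin p) (Fin q) ℝ)
    (X : Matrix (Fin n) (Fin p) ℝ) (Y : Matrix (Fin q) (Fin n) ℝ)
    (G : Matrix (Fin q) (Fin q) ℝ) (hG : (G + Gᵀ).PosDef)
    (h : NegDef (Matrix.fromBlocks Q (X * N + Yᵀ * Gᵀ) (Nᵀ * Xᵀ + G * Y) (-(G + Gᵀ)))) :
    NegDef (Q + X * N * Y + (X * N * Y)ᵀ) :=
  stmt_0_general Q N X Y G h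
end

section
/- Let N be a p×q real matrix, X an n×p real matrix, Y a q×n real matrix, and G a q×q real matrix with G + Gᵀ positive definite. Then (X N + Yᵀ Gᵀ)(G + Gᵀ)⁻¹(Nᵀ Xᵀ + G Y) − (X N Y + YᵀNᵀXᵀ) = (X N − Yᵀ G)(G + Gᵀ)⁻¹(Nᵀ Xᵀ − Gᵀ Y). In particular, X N Y + Yᵀ Nᵀ Xᵀ ⪯ (X N + Yᵀ Gᵀ)(G + Gᵀ)⁻¹(Nᵀ Xᵀ + G Y), i.e. the difference is positive semidefinite. -/
/-! With `S = G + H`, the two sides of the identity differ by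
`a (S⁻¹ S - 1) y + z (S S⁻¹ - 1) b + z (H S⁻¹ G - G S⁻¹ H) y`, and the last bracket vanishes
because both products equal `G - G S⁻¹ G`. For `H = Gᵀ` the right-hand side has the form
`B S⁻¹ Bᵀ` with `S⁻¹ ≻ 0`, hence is positive semidefinite. -/

open Matrix

namespace Matrix

variable {m k q R : Type*} [Fintype q] [DecidableEq q] [CommRing R]

theorem mul_inv_add_mul_comm {G H : Matrix q q R} (hS : IsUnit (G + H).det) :
    H * (G + H)⁻¹ * G = G * (G + H)⁻¹ * H := by
  have hH : H = (G + H) - G := (add_sub_cancel_left G H).symm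
  calc H * (G + H)⁻¹ * G = G - G * (G + H)⁻¹ * G := by
        nth_rw 1 [hH]; rw [sub_mul, sub_mul, mul_nonsing_inv _ hS, one_mul]
    _ = G * (G + H)⁻¹ * H := by
        nth_rw 3 [hH]; rw [mul_sub, Matrix.mul_assoc G _ (G + H), nonsing_inv_mul _ hS, mul_one]

theorem add_mul_inv_add_mul_add_sub {G H : Matrix q q R} (hS : IsUnit (G + H).det)
    (a z : Matrix m q R) (b y : Matrix q k R) :
    (a + z * H) * (G + H)⁻¹ * (b + G * y) - (a * y + z * b)
      = (a - z * G) * (G + H)⁻¹ * (b - H * y) := by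
  set T := (G + H)⁻¹
  calc (a + z * H) * T * (b + G * y) - (a * y + z * b)
      = (a - z * G) * T * (b - H * y) + (a * (T * (G + H)) * y + z * ((G + H) * T) * b
          + z * (H * T * G - G * T * H) * y - (a * y + z * b)) := by
        simp only [Matrix.mul_add, Matrix.add_mul, Matrix.sub_mul, Matrix.mul_sub,
          Matrix.mul_assoc]
        abel
    _ = (a - z * G) * T * (b - H * y) := by
        rw [nonsing_inv_mul _ hS, mul_nonsing_inv _ hS,
          show H * T * G = G * T * H from mul_inv_add_mul_comm hS]
        simp

end Matrix

/-- Completion-of-squares identity behind the overbounding theorem, together with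
the resulting semidefinite bound
`X N Y + Yᵀ Nᵀ Xᵀ ⪯ (X N + Yᵀ Gᵀ)(G + Gᵀ)⁻¹(Nᵀ Xᵀ + G Y)`. -/
theorem stmt_1 {n p q : ℕ}
    (N : Matrix (Fin p) (Fin q) ℝ)
    (X : Matrix (Fin n) (Fin p) ℝ) (Y : Matrix (Fin q) (Fin n) ℝ)
    (G : Matrix (Fin q) (Fin q) ℝ) (hG : (G + Gᵀ).PosDef) :
    (X * N + Yᵀ * Gᵀ) * (G + Gᵀ)⁻¹ * (Nᵀ * Xᵀ + G * Y) - (X * N * Y + Yᵀ * Nᵀ * Xᵀ)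
        = (X * N - Yᵀ * G) * (G + Gᵀ)⁻¹ * (Nᵀ * Xᵀ - Gᵀ * Y) ∧
    ((X * N + Yᵀ * Gᵀ) * (G + Gᵀ)⁻¹ * (Nᵀ * Xᵀ + G * Y)
        - (X * N * Y + Yᵀ * Nᵀ * Xᵀ)).PosSemidef := by
  have hid : (X * N + Yᵀ * Gᵀ) * (G + Gᵀ)⁻¹ * (Nᵀ * Xᵀ + G * Y) - (X * N * Y + Yᵀ * Nᵀ * Xᵀ)
      = (X * N - Yᵀ * G) * (G + Gᵀ)⁻¹ * (Nᵀ * Xᵀ - Gᵀ * Y) := by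
    rw [Matrix.mul_assoc Yᵀ Nᵀ Xᵀ]
    exact add_mul_inv_add_mul_add_sub hG.det_pos.ne'.isUnit _ _ _ _
  have htranspose : (X * N - Yᵀ * G)ᴴ = Nᵀ * Xᵀ - Gᵀ * Y := by
    simp only [conjTranspose_eq_transpose_of_trivial, transpose_sub, transpose_mul,
      transpose_transpose]
  refine ⟨hid, hid ▸ ?_⟩
  simpa only [htranspose] using
    hG.inv.posSemidef.mul_mul_conjTranspose_same (X * N - Yᵀ * G)
end

section
/- Let G be a map taking each signal u : ℝ → ℝ^m in L₂e to a signal G(u) : ℝ → ℝ^l in L₂e. Suppose there exist κ > 0 and c ≥ 0 such that for all u ∈ L₂e^m and all T ≥ 0, (∫₀ᵀ ‖(G u)(t)‖² dt)^{1/2} ≤ κ (∫₀ᵀ ‖u(t)‖² dt)^{1/2} + c. Then G is QSR-dissipative with Q = −I (which is negative definite), S = 0, R = 2κ²·I, and dissipation constant β = −2c²: that is, for all u ∈ L₂e^m and all T ≥ 0, ∫₀ᵀ ( −‖(G u)(t)‖² + 2κ² ‖u(t)‖² ) dt ≥ −2c². -/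
open Matrix MeasureTheory

/-- Squared Euclidean norm of a vector, `‖w‖² = Σᵢ wᵢ²`. -/
def sqNorm {n : ℕ} (w : Fin n → ℝ) : ℝ := ∑ i, (w i) ^ 2

/-- A signal is in the extended L₂ space if its squared norm is integrable on
`[0, T]` for every `T ≥ 0`. -/
def L2e {n : ℕ} (w : ℝ → Fin n → ℝ) : Prop :=
  ∀ T ≥ (0 : ℝ), IntervalIntegrable (fun t => sqNorm (w t)) volume 0 T

lemma sqNorm_nonneg {n : ℕ} (w : Fin n → ℝ) : 0 ≤ sqNorm w :=
  Finset.sum_nonneg fun i _ => sq_nonneg (w i)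

lemma integral_sqNorm_nonneg {n : ℕ} (w : ℝ → Fin n → ℝ) {T : ℝ} (hT : 0 ≤ T) :
    0 ≤ ∫ t in (0 : ℝ)..T, sqNorm (w t) :=
  intervalIntegral.integral_nonneg hT fun t _ => sqNorm_nonneg (w t)

lemma Real.le_of_sqrt_le_mul_sqrt_add {x y a b : ℝ} (hy : 0 ≤ y) (h : √x ≤ a * √y + b) :
    x ≤ 2 * a ^ 2 * y + 2 * b ^ 2 :=
  calc x ≤ (a * √y + b) ^ 2 := (Real.sqrt_le_iff.mp h).2
    _ ≤ 2 * ((a * √y) ^ 2 + b ^ 2) := add_sq_le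
    _ = 2 * a ^ 2 * y + 2 * b ^ 2 := by rw [mul_pow, Real.sq_sqrt hy]; ring

lemma intervalIntegral.integral_neg_add_const_mul {f g : ℝ → ℝ} {a b : ℝ} (r : ℝ)
    (hf : IntervalIntegrable f volume a b) (hg : IntervalIntegrable g volume a b) :
    ∫ t in a..b, (-f t + r * g t) = (-∫ t in a..b, f t) + r * ∫ t in a..b, g t := by
  rw [intervalIntegral.integral_add (f := fun t => -f t) hf.neg (hg.const_mul r),
    intervalIntegral.integral_neg, intervalIntegral.integral_const_mul]

theorem stmt_10_general {l m : ℕ}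
    (G : (ℝ → Fin m → ℝ) → (ℝ → Fin l → ℝ))
    (hG : ∀ u, L2e u → L2e (G u))
    (κ c : ℝ)
    (hstab : ∀ u, L2e u → ∀ T ≥ (0 : ℝ),
      Real.sqrt (∫ t in (0 : ℝ)..T, sqNorm (G u t))
        ≤ κ * Real.sqrt (∫ t in (0 : ℝ)..T, sqNorm (u t)) + c) :
    ∀ u, L2e u → ∀ T ≥ (0 : ℝ),
      -(2 * c ^ 2) ≤ ∫ t in (0 : ℝ)..T,
        (-(sqNorm (G u t)) + 2 * κ ^ 2 * sqNorm (u t)) := by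
  intro u hu T hT
  have hbound := Real.le_of_sqrt_le_mul_sqrt_add (integral_sqNorm_nonneg u hT) (hstab u hu T hT)
  rw [intervalIntegral.integral_neg_add_const_mul _ (hG u hu T hT) (hu T hT)]
  linarith

/-- Necessity direction: an L₂-stable operator is QSR-dissipative with
`Q = −I`, `S = 0`, `R = 2κ²·I` and dissipation constant `β = −2c²`; the
dissipation inequality reads `∫₀ᵀ (−‖Gu‖² + 2κ²‖u‖²) dt ≥ −2c²`. -/
theorem stmt_10 {l m : ℕ}
    (G : (ℝ → Fin m → ℝ) → (ℝ → Fin l → ℝ))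
    (hG : ∀ u, L2e u → L2e (G u))
    (κ c : ℝ) (hκ : 0 < κ) (hc : 0 ≤ c)
    (hstab : ∀ u, L2e u → ∀ T ≥ (0 : ℝ),
      Real.sqrt (∫ t in (0 : ℝ)..T, sqNorm (G u t))
        ≤ κ * Real.sqrt (∫ t in (0 : ℝ)..T, sqNorm (u t)) + c) :
    ∀ u, L2e u → ∀ T ≥ (0 : ℝ),
      -(2 * c ^ 2) ≤ ∫ t in (0 : ℝ)..T,
        (-(sqNorm (G u t)) + 2 * κ ^ 2 * sqNorm (u t)) :=
  stmt_10_general G hG κ c hstab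
end

section
/- Let γ > 0, ρ > 0, and let V be a real n×m matrix. Consider the function f(Z) = γ·(if Z ≠ 0 then 1 else 0) + (ρ/2)·‖V − Z‖_F² over real n×m matrices Z, where ‖·‖_F is the Frobenius norm. If ‖V‖_F > √(2γ/ρ), then Z = V is the unique global minimizer of f; if ‖V‖_F < √(2γ/ρ), then Z = 0 is the unique global minimizer of f. -/
open scoped Classical

/-- Frobenius norm of a real matrix, `‖M‖_F = (Σᵢⱼ Mᵢⱼ²)^{1/2}`. -/
noncomputable def frobNorm {n m : ℕ} (M : Matrix (Fin n) (Fin m) ℝ) : ℝ :=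
  Real.sqrt (∑ i, ∑ j, (M i j) ^ 2)

/-! The candidate `Z = V` costs `γ` and the candidate `Z = 0` costs `ρ/2 · ‖V‖²`, while every
other `Z` costs `γ + ρ/2 · ‖V - Z‖² > γ`. So the minimizer is decided by comparing `γ` with
`ρ/2 · ‖V‖²`, i.e. `‖V‖` with `√(2γ/ρ)`. The argument works in any normed group; the Frobenius
norm is the norm of `Matrix.frobeniusNormedAddCommGroup`. -/

theorem Real.sqrt_two_mul_div_lt_iff {γ ρ a : ℝ} (hρ : 0 < ρ) (ha : 0 < a) :
    √(2 * γ / ρ) < a ↔ γ < ρ / 2 * a ^ 2 := by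
  rw [Real.sqrt_lt' ha, div_lt_iff₀ hρ]
  constructor <;> intro h <;> linarith

theorem Real.lt_sqrt_two_mul_div_iff {γ ρ a : ℝ} (hρ : 0 < ρ) (ha : 0 ≤ a) :
    a < √(2 * γ / ρ) ↔ ρ / 2 * a ^ 2 < γ := by
  rw [Real.lt_sqrt ha, lt_div_iff₀ hρ]
  constructor <;> intro h <;> linarith

section CardPenaltyCost

variable {E : Type*} [NormedAddCommGroup E] [DecidableEq E]

noncomputable def cardPenaltyCost (γ ρ : ℝ) (V Z : E) : ℝ :=
  γ * (if Z ≠ 0 then 1 else 0) + ρ / 2 * ‖V - Z‖ ^ 2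

variable {γ ρ : ℝ} {V Z : E}

theorem cardPenaltyCost_zero : cardPenaltyCost γ ρ V 0 = ρ / 2 * ‖V‖ ^ 2 := by
  simp [cardPenaltyCost]

theorem cardPenaltyCost_of_ne_zero (hZ : Z ≠ 0) :
    cardPenaltyCost γ ρ V Z = γ + ρ / 2 * ‖V - Z‖ ^ 2 := by
  simp [cardPenaltyCost, hZ]

theorem cardPenaltyCost_self (hV : V ≠ 0) : cardPenaltyCost γ ρ V V = γ := by
  simp [cardPenaltyCost_of_ne_zero hV]

theorem cardPenaltyCost_self_lt (hρ : 0 < ρ) (hV : √(2 * γ / ρ) < ‖V‖) (hZ : Z ≠ V) :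
    cardPenaltyCost γ ρ V V < cardPenaltyCost γ ρ V Z := by
  have hV_pos : 0 < ‖V‖ := (Real.sqrt_nonneg _).trans_lt hV
  rw [cardPenaltyCost_self (norm_pos_iff.mp hV_pos)]
  by_cases hZ0 : Z = 0
  · rw [hZ0, cardPenaltyCost_zero]
    exact (Real.sqrt_two_mul_div_lt_iff hρ hV_pos).mp hV
  · have hVZ : 0 < ‖V - Z‖ := norm_pos_iff.mpr (sub_ne_zero.mpr hZ.symm)
    rw [cardPenaltyCost_of_ne_zero hZ0]
    exact lt_add_of_pos_right γ (by positivity)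

theorem cardPenaltyCost_zero_lt (hρ : 0 < ρ) (hV : ‖V‖ < √(2 * γ / ρ)) (hZ : Z ≠ 0) :
    cardPenaltyCost γ ρ V 0 < cardPenaltyCost γ ρ V Z := by
  rw [cardPenaltyCost_zero, cardPenaltyCost_of_ne_zero hZ]
  calc ρ / 2 * ‖V‖ ^ 2 < γ := (Real.lt_sqrt_two_mul_div_iff hρ (norm_nonneg V)).mp hV
    _ ≤ γ + ρ / 2 * ‖V - Z‖ ^ 2 := le_add_of_nonneg_right (by positivity)

end CardPenaltyCost

attribute [local instance] Matrix.frobeniusNormedAddCommGroup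

theorem frobNorm_eq_norm {n m : ℕ} (M : Matrix (Fin n) (Fin m) ℝ) : frobNorm M = ‖M‖ := by
  rw [Matrix.frobenius_norm_def, frobNorm, Real.sqrt_eq_rpow]
  simp

theorem stmt_12_general {n m : ℕ} (γ ρ : ℝ) (hρ : 0 < ρ)
    (V : Matrix (Fin n) (Fin m) ℝ)
    (f : Matrix (Fin n) (Fin m) ℝ → ℝ)
    (hf : ∀ Z, f Z = γ * (if Z ≠ 0 then 1 else 0) + ρ / 2 * (frobNorm (V - Z)) ^ 2) :
    (frobNorm V > Real.sqrt (2 * γ / ρ) →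
      ∀ Z, Z ≠ V → f V < f Z) ∧
    (frobNorm V < Real.sqrt (2 * γ / ρ) →
      ∀ Z, Z ≠ 0 → f 0 < f Z) := by
  obtain rfl : f = cardPenaltyCost γ ρ V := funext fun Z => by
    rw [hf, frobNorm_eq_norm, cardPenaltyCost]
  rw [frobNorm_eq_norm]
  exact ⟨fun hV _ => cardPenaltyCost_self_lt hρ hV, fun hV _ => cardPenaltyCost_zero_lt hρ hV⟩

/-- Block hard-thresholding: the exact solution of the Z-update step of the
ADMM iteration with the cardinality penalty. If `‖V‖_F > √(2γ/ρ)` then `Z = V`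
is the unique global minimizer of
`f(Z) = γ·card(‖Z‖_F) + (ρ/2)‖V − Z‖_F²`; if `‖V‖_F < √(2γ/ρ)` then `Z = 0` is
the unique global minimizer. -/
theorem stmt_12 {n m : ℕ} (γ ρ : ℝ) (hγ : 0 < γ) (hρ : 0 < ρ)
    (V : Matrix (Fin n) (Fin m) ℝ)
    (f : Matrix (Fin n) (Fin m) ℝ → ℝ)
    (hf : ∀ Z, f Z = γ * (if Z ≠ 0 then 1 else 0) + ρ / 2 * (frobNorm (V - Z)) ^ 2) :
    (frobNorm V > Real.sqrt (2 * γ / ρ) →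
      ∀ Z, Z ≠ V → f V < f Z) ∧
    (frobNorm V < Real.sqrt (2 * γ / ρ) →
      ∀ Z, Z ≠ 0 → f 0 < f Z) :=
  stmt_12_general γ ρ hρ V f hf
end
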